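/- arXiv:math/0503623 — 6 statements merged into one kernel-verified Lean document; each statement's English description precedes it below -/
import Mathlib

section
/- Let G be a graph with no even cycle of length at most 2k, and let u, v be vertices joined by a path of length at most k. If P* is a uv-geodesic, then P* is the unique shortest uv-path. -/
/-!
Two distinct `uv`-paths contain subpaths `p'`, `q'` between common endpoints `x, y` that together
form a cycle. Subpaths of geodesics are geodesics, so `p'` and `q'` both have length `dist x y`,
and the cycle they form is even of length `2 * dist x y ≤ 2 * dist u v ≤ 2k`.
-/

namespace SimpleGraph.Walk

variable {V : Type*} {G : SimpleGraph V} {u v : V}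

lemma length_eq_dist_of_forall_isPath_length_le {p : G.Walk u v}
    (h : ∀ q : G.Walk u v, q.IsPath → p.length ≤ q.length) : p.length = G.dist u v := by
  obtain ⟨q, hq, hql⟩ := p.reachable.exists_path_of_dist
  exact le_antisymm (hql ▸ h q hq) (dist_le p)

lemma exists_isCycle_even_length_le_of_ne {p q : G.Walk u v} (hp : p.length = G.dist u v)
    (hq : q.length = G.dist u v) (hne : p ≠ q) :
    ∃ (x : V) (c : G.Walk x x), c.IsCycle ∧ Even c.length ∧ c.length ≤ 2 * G.dist u v := by
  obtain ⟨x, y, p', q', hp', hq', hc⟩ :=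
    (p.isPath_of_length_eq_dist hp).exists_isCycle_of_ne (q.isPath_of_length_eq_dist hq) hne
  have hp'len : p'.length = G.dist x y := length_eq_dist_of_subwalk hp hp'
  have hq'len : q'.length = G.dist x y := length_eq_dist_of_subwalk hq hq'
  have hcycle_len : (p'.append q'.reverse).length = 2 * G.dist x y := by
    rw [length_append, length_reverse, hp'len, hq'len, two_mul]
  have hshorter : p'.length ≤ p.length := length_le_of_isSubwalk hp'
  refine ⟨x, _, hc, hcycle_len ▸ even_two_mul _, ?_⟩
  omega

end SimpleGraph.Walk

open SimpleGraph Walk in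
theorem geodesic_unique_general {V : Type*} (G : SimpleGraph V) (k : ℕ)
    (hcyc : ∀ (x : V) (c : G.Walk x x), c.IsCycle → Even c.length → ¬ c.length ≤ 2 * k)
    (u v : V) (hdist : ∃ p : G.Walk u v, p.IsPath ∧ p.length ≤ k)
    (P : G.Walk u v) (hPgeo : ∀ q : G.Walk u v, q.IsPath → P.length ≤ q.length)
    (Q : G.Walk u v) (hQgeo : ∀ q : G.Walk u v, q.IsPath → Q.length ≤ q.length) :
    P = Q := by
  obtain ⟨p, hp, hpk⟩ := hdist
  have hP : P.length = G.dist u v := length_eq_dist_of_forall_isPath_length_le hPgeo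
  have hQ : Q.length = G.dist u v := length_eq_dist_of_forall_isPath_length_le hQgeo
  by_contra hne
  obtain ⟨x, c, hc, heven, hlen⟩ := exists_isCycle_even_length_le_of_ne hP hQ hne
  have hPk : P.length ≤ k := (hPgeo p hp).trans hpk
  exact hcyc x c hc heven (by omega)

/-- In a graph with no even cycle of length at most `2k`, if `u, v` are joined by a path of
length at most `k`, then the `uv`-geodesic is unique: any two shortest `uv`-paths coincide. -/
theorem geodesic_unique {V : Type*} (G : SimpleGraph V) (k : ℕ) (hk : 2 ≤ k)
    (hcyc : ∀ (x : V) (c : G.Walk x x), c.IsCycle → Even c.length → ¬ c.length ≤ 2 * k)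
    (u v : V) (hdist : ∃ p : G.Walk u v, p.IsPath ∧ p.length ≤ k)
    (P : G.Walk u v) (hP : P.IsPath) (hPgeo : ∀ q : G.Walk u v, q.IsPath → P.length ≤ q.length)
    (Q : G.Walk u v) (hQ : Q.IsPath) (hQgeo : ∀ q : G.Walk u v, q.IsPath → Q.length ≤ q.length) :
    P = Q :=
  geodesic_unique_general G k hcyc u v hdist P hPgeo Q hQgeo
end

section
/- Let G be a graph with no even cycle of length at most 2k and u, v distinct vertices. Then the number of uv-paths of length exactly k is less than 2^k. -/
/-!
The heart of the matter is that three `u`–`v` paths of length at most `k` cannot leave `u`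
through three different neighbours. Among the three pairs of paths take one, `A` and `B`, that
meets again after `u` at `A p = B q` with `p + q` as small as possible; their initial segments
form a cycle. Either the third path `C` returns to this cycle, or `A` returns to the analogous
cycle of `B` and `C` (this time with `p ≤ q` arranged by symmetry). The first return creates a
theta graph, and the minimality of `p + q` bounds all three of its cycles by `2k`. Two of the
three arms of a theta graph have lengths of the same parity, so it contains a short even cycle.

So the `u`–`v` paths of length at most `k` use at most two second vertices, and induction on the
length bounds the number of `u`–`v` paths of length `k` by `2^(k-1)`.
-/

open Set

namespace SimpleGraph

variable {V : Type*} {G : SimpleGraph V}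

def EvenCycleFreeUpTo (G : SimpleGraph V) (m : ℕ) : Prop :=
  ∀ (x : V) (c : G.Walk x x), c.IsCycle → Even c.length → ¬ c.length ≤ m

structure IsPathSeq (G : SimpleGraph V) (f : ℕ → V) (n : ℕ) : Prop where
  adj : ∀ i < n, G.Adj (f i) (f (i + 1))
  injOn : InjOn f (Iic n)

theorem Walk.IsPath.isPathSeq {u v : V} {p : G.Walk u v} (hp : p.IsPath) :
    G.IsPathSeq p.getVert p.length :=
  ⟨fun _ hi => p.adj_getVert_succ hi, hp.getVert_injOn⟩

theorem exists_walk_getVert_eq :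
    ∀ {n : ℕ} {f : ℕ → V}, (∀ i < n, G.Adj (f i) (f (i + 1))) →
      ∃ w : G.Walk (f 0) (f n), w.length = n ∧ ∀ i ≤ n, w.getVert i = f i
  | 0, f, _ => ⟨.nil, rfl, fun i hi => by simp [Nat.le_zero.1 hi]⟩
  | n + 1, f, hadj => by
    obtain ⟨w, hlen, hw⟩ := exists_walk_getVert_eq (n := n) (f := fun i => f (i + 1))
      fun i hi => hadj (i + 1) (by omega)
    refine ⟨.cons (hadj 0 (by omega)) w, by simp [hlen], fun i hi => ?_⟩
    rcases i with _ | i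
    · simp
    · simpa using hw i (by omega)

namespace IsPathSeq

variable {f : ℕ → V} {m n : ℕ}

theorem mono (h : G.IsPathSeq f n) (hm : m ≤ n) : G.IsPathSeq f m :=
  ⟨fun i hi => h.adj i (by omega), h.injOn.mono (Iic_subset_Iic.2 hm)⟩

theorem exists_isPath (h : G.IsPathSeq f n) :
    ∃ w : G.Walk (f 0) (f n), w.IsPath ∧ w.length = n := by
  obtain ⟨w, hlen, hw⟩ := exists_walk_getVert_eq h.adj
  refine ⟨w, (Walk.IsPath.getVert_injOn_iff w).1 fun i hi j hj hij => ?_, hlen⟩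
  rw [mem_ofPred_eq, hlen] at hi hj
  exact h.injOn hi hj (by rwa [← hw i hi, ← hw j hj])

theorem exists_isCycle (h : G.IsPathSeq f n) (hadj : G.Adj (f n) (f 0)) (hn : 2 ≤ n) :
    ∃ c : G.Walk (f n) (f n), c.IsCycle ∧ c.length = n + 1 := by
  obtain ⟨w, hw, hlen⟩ := h.exists_isPath
  refine ⟨.cons hadj w, Walk.isCycle_iff_isPath_tail_and_le_length.2 ⟨?_, ?_⟩,
    by simp [hlen]⟩
  · simpa using hw
  · simp only [Walk.length_cons]
    omega

end IsPathSeq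

def joinRev (f : ℕ → V) (a : ℕ) (g : ℕ → V) (b : ℕ) (i : ℕ) : V :=
  if i ≤ a then f i else g (a + b - i)

section joinRev

variable {f g : ℕ → V} {a b e i : ℕ}

theorem joinRev_of_le (h : i ≤ a) : joinRev f a g b i = f i := if_pos h

theorem joinRev_of_lt (h : a < i) : joinRev f a g b i = g (a + b - i) := if_neg (not_le.2 h)

theorem joinRev_add_sub (hfg : f a = g b) (he : e ≤ b) : joinRev f a g b (a + (b - e)) = g e := by
  rcases he.eq_or_lt with rfl | he
  · rw [Nat.sub_self, add_zero, joinRev_of_le le_rfl, hfg]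
  · rw [joinRev_of_lt (by omega)]
    congr 1
    omega

theorem image_joinRev_Ioo_subset (he : e ≤ b) :
    joinRev f a g b '' Ioo 0 (a + (b - e)) ⊆ f '' Ioc 0 a ∪ g '' Ioo e b := by
  rintro _ ⟨i, ⟨hi₀, hi⟩, rfl⟩
  rcases le_or_gt i a with hia | hia
  · exact Or.inl ⟨i, ⟨hi₀, hia⟩, (joinRev_of_le hia).symm⟩
  · exact Or.inr ⟨a + b - i, ⟨by omega, by omega⟩, (joinRev_of_lt hia).symm⟩

theorem IsPathSeq.joinRev (hf : G.IsPathSeq f a) (hg : G.IsPathSeq g b) (hfg : f a = g b)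
    (he : e ≤ b) (hdisj : ∀ i < a, ∀ j, e ≤ j → j ≤ b → f i ≠ g j) :
    G.IsPathSeq (joinRev f a g b) (a + (b - e)) := by
  refine ⟨fun i hi => ?_, fun i hi j hj hij => ?_⟩
  · rcases lt_trichotomy (i + 1) (a + 1) with hia | hia | hia
    · rw [joinRev_of_le (by omega), joinRev_of_le (by omega)]
      exact hf.adj i (by omega)
    · rw [joinRev_of_le (by omega), joinRev_of_lt (by omega), show i = a by omega, hfg]
      simpa [show a + b - (a + 1) + 1 = b by omega] using
        (hg.adj (a + b - (a + 1)) (by omega)).symm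
    · rw [joinRev_of_lt (by omega), joinRev_of_lt (by omega)]
      simpa [show a + b - (i + 1) + 1 = a + b - i by omega] using
        (hg.adj (a + b - (i + 1)) (by omega)).symm
  · rw [mem_Iic] at hi hj
    rcases le_or_gt i a with hia | hia <;> rcases le_or_gt j a with hja | hja
    · rw [joinRev_of_le hia, joinRev_of_le hja] at hij
      exact hf.injOn hia hja hij
    · rw [joinRev_of_le hia, joinRev_of_lt hja] at hij
      rcases hia.lt_or_eq with hia | rfl
      · exact absurd hij (hdisj i hia _ (by omega) (by omega))
      · have := hg.injOn (mem_Iic.2 le_rfl) (mem_Iic.2 (by omega)) (hfg.symm.trans hij)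
        omega
    · rw [joinRev_of_lt hia, joinRev_of_le hja] at hij
      rcases hja.lt_or_eq with hja | rfl
      · exact absurd hij.symm (hdisj j hja _ (by omega) (by omega))
      · have := hg.injOn (mem_Iic.2 le_rfl) (mem_Iic.2 (by omega)) (hfg.symm.trans hij.symm)
        omega
    · rw [joinRev_of_lt hia, joinRev_of_lt hja] at hij
      have := hg.injOn (mem_Iic.2 (by omega)) (mem_Iic.2 (by omega)) hij
      omega

end joinRev

/-- `snd_ne` excludes a single edge traversed twice. -/
structure IsCycleSplit (G : SimpleGraph V) (f : ℕ → V) (a : ℕ) (g : ℕ → V) (b : ℕ) :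
    Prop where
  left : G.IsPathSeq f a
  right : G.IsPathSeq g b
  start : f 0 = g 0
  finish : f a = g b
  disjoint : Disjoint (f '' Ioo 0 a) (g '' Ioo 0 b)
  pos : 0 < a
  snd_ne : f 1 ≠ g 1

section IsCycleSplit

variable {f g h : ℕ → V} {a b c m : ℕ}

namespace IsCycleSplit

theorem exists_isCycle (hfg : G.IsCycleSplit f a g b) :
    ∃ x, ∃ c : G.Walk x x, c.IsCycle ∧ c.length = a + b := by
  have hf := hfg.left.injOn
  have hg := hfg.right.injOn
  have hb : 0 < b := by
    by_contra! hb
    have := hf (mem_Iic.2 le_rfl) (mem_Iic.2 (Nat.zero_le a))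
      (by rw [hfg.finish, hfg.start, Nat.le_zero.1 hb])
    exact hfg.pos.ne' this
  have h3 : 3 ≤ a + b := by
    by_contra!
    obtain ⟨rfl, rfl⟩ : a = 1 ∧ b = 1 := by have := hfg.pos; omega
    exact hfg.snd_ne hfg.finish
  have hpath := hfg.left.joinRev hfg.right hfg.finish hb fun i hi j hj1 hjb hij => by
    rcases Nat.eq_zero_or_pos i with rfl | hi0
    · have := hg (mem_Iic.2 (Nat.zero_le b)) (mem_Iic.2 hjb) (hfg.start ▸ hij)
      omega
    rcases hjb.lt_or_eq with hjb | rfl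
    · exact hfg.disjoint.ne_of_mem ⟨i, ⟨hi0, hi⟩, rfl⟩ ⟨j, ⟨hj1, hjb⟩, rfl⟩ hij
    · have := hf (mem_Iic.2 hi.le) (mem_Iic.2 le_rfl) (hij.trans hfg.finish.symm)
      omega
  have hadj : G.Adj (joinRev f a g b (a + (b - 1))) (joinRev f a g b 0) := by
    rw [joinRev_add_sub hfg.finish hb, joinRev_of_le (Nat.zero_le a), hfg.start]
    exact (hfg.right.adj 0 hb).symm
  obtain ⟨c, hc, hlen⟩ := hpath.exists_isCycle hadj (by omega)
  exact ⟨_, c, hc, by omega⟩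

theorem odd_add (hG : G.EvenCycleFreeUpTo m) (hfg : G.IsCycleSplit f a g b) (hm : a + b ≤ m) :
    Odd (a + b) := by
  obtain ⟨x, c, hc, hlen⟩ := hfg.exists_isCycle
  rw [← Nat.not_even_iff_odd]
  intro heven
  exact hG x c hc (hlen ▸ heven) (hlen ▸ hm)

end IsCycleSplit

/-- The lengths of the three cycles of a theta graph add up to an even number. -/
theorem not_isCycleSplit_theta (hG : G.EvenCycleFreeUpTo m) (hfg : G.IsCycleSplit f a g b)
    (hfh : G.IsCycleSplit f a h c) (hgh : G.IsCycleSplit g b h c)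
    (hab : a + b ≤ m) (hac : a + c ≤ m) (hbc : b + c ≤ m) : False := by
  have h₁ := Nat.odd_iff.1 (hfg.odd_add hG hab)
  have h₂ := Nat.odd_iff.1 (hfh.odd_add hG hac)
  have h₃ := Nat.odd_iff.1 (hgh.odd_add hG hbc)
  omega

end IsCycleSplit

namespace Walk

variable {u v : V}

def IsMeetLowerBound (Y Z : G.Walk u v) (s : ℕ) : Prop :=
  ∀ i l, 0 < i → i ≤ Y.length → 0 < l → l ≤ Z.length → Y.getVert i = Z.getVert l →
    s ≤ i + l

section IsMeetLowerBound

variable {Y Z : G.Walk u v} {s t : ℕ}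

theorem IsMeetLowerBound.symm (h : Y.IsMeetLowerBound Z s) : Z.IsMeetLowerBound Y s :=
  fun i l hi hiZ hl hlY he => add_comm l i ▸ h l i hl hlY hi hiZ he.symm

theorem IsMeetLowerBound.mono (h : Y.IsMeetLowerBound Z s) (hts : t ≤ s) :
    Y.IsMeetLowerBound Z t :=
  fun i l hi hiY hl hlZ he => hts.trans (h i l hi hiY hl hlZ he)

theorem exists_isMeetLowerBound (Y Z : G.Walk u v) (hY : 0 < Y.length) (hZ : 0 < Z.length) :
    ∃ y ∈ Ioc 0 Y.length, ∃ z ∈ Ioc 0 Z.length,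
      Y.getVert y = Z.getVert z ∧ Y.IsMeetLowerBound Z (y + z) := by
  classical
  have hex : ∃ s, ∃ y ∈ Ioc 0 Y.length, ∃ z ∈ Ioc 0 Z.length,
      Y.getVert y = Z.getVert z ∧ y + z = s :=
    ⟨_, Y.length, ⟨hY, le_rfl⟩, Z.length, ⟨hZ, le_rfl⟩, by simp, rfl⟩
  obtain ⟨y, hy, z, hz, hyz, hs⟩ := Nat.find_spec hex
  exact ⟨y, hy, z, hz, hyz, fun i l hi hiY hl hlZ he =>
    hs ▸ Nat.find_min' hex ⟨i, ⟨hi, hiY⟩, l, ⟨hl, hlZ⟩, he, rfl⟩⟩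

end IsMeetLowerBound

theorem exists_first_getVert_mem {X : G.Walk u v} {S : Set V}
    (h : ¬ Disjoint (X.getVert '' Ioc 0 X.length) S) :
    ∃ i ∈ Ioc 0 X.length, X.getVert i ∈ S ∧ Disjoint (X.getVert '' Ioo 0 i) S := by
  classical
  obtain ⟨_, ⟨i, hi, rfl⟩, hiS⟩ := not_disjoint_iff.1 h
  have hex : ∃ i, i ∈ Ioc 0 X.length ∧ X.getVert i ∈ S := ⟨i, hi, hiS⟩
  obtain ⟨hi', hS'⟩ := Nat.find_spec hex
  refine ⟨Nat.find hex, hi', hS', Set.disjoint_left.2 ?_⟩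
  rintro _ ⟨j, ⟨hj₀, hj⟩, rfl⟩ hjS
  exact Nat.find_min hex hj ⟨⟨hj₀, hj.le.trans hi'.2⟩, hjS⟩

theorem encard_setOf_isPath_length_succ_le {x y w₁ w₂ : V} {n : ℕ}
    (hw : ∀ p : G.Walk x y, p.IsPath → p.length = n + 1 →
      p.getVert 1 = w₁ ∨ p.getVert 1 = w₂) :
    {p : G.Walk x y | p.IsPath ∧ p.length = n + 1}.encard ≤
      {q : G.Walk w₁ y | q.IsPath ∧ q.length = n}.encard +
        {q : G.Walk w₂ y | q.IsPath ∧ q.length = n}.encard := by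
  set T := {p : G.Walk x y | p.IsPath ∧ p.length = n + 1}
  set P := fun w : V => {q : G.Walk w y | q.IsPath ∧ q.length = n}
  have hinj : InjOn (fun p : G.Walk x y => p.tail.support) T := fun p hp q hq hpq => by
    have hp₀ : ¬ p.Nil := by simp [not_nil_iff_lt_length, hp.2]
    have hq₀ : ¬ q.Nil := by simp [not_nil_iff_lt_length, hq.2]
    refine ext_support ?_
    rw [← cons_support_tail hp₀, ← cons_support_tail hq₀]
    exact congrArg (x :: ·) hpq
  have htail : ∀ p ∈ T, p.tail.support ∈ support '' P w₁ ∪ support '' P w₂ := by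
    intro p hp
    have hmem : ∀ w (hw : p.getVert 1 = w), p.tail.support ∈ support '' P w :=
      fun w hw => ⟨p.tail.copy hw rfl, ⟨by simpa using hp.1.tail, by simp [hp.2]⟩, by simp⟩
    exact (hw p hp.1 hp.2).imp (hmem w₁) (hmem w₂)
  calc T.encard = ((fun p : G.Walk x y => p.tail.support) '' T).encard :=
        hinj.encard_image.symm
    _ ≤ (support '' P w₁ ∪ support '' P w₂).encard :=
      encard_le_encard (image_subset_iff.2 htail)
    _ ≤ (P w₁).encard + (P w₂).encard :=
      (encard_union_le _ _).trans (add_le_add (encard_image_le _ _) (encard_image_le _ _))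

end Walk

namespace EvenCycleFreeUpTo

open Walk

variable {k m : ℕ} {u v : V} {A B C X Y Z : G.Walk u v}

/-- `Y.getVert y = Z.getVert z` closes a shortest cycle through the first steps of `Y` and `Z`,
and `X.getVert i = Y.getVert j` is the first return of `X` to it. The three arms of the resulting
theta graph between `u` and `Y.getVert j` are `X` up to `i`, `Y` up to `j`, and `Z` up to `z`
followed by `Y` backwards from `y` to `j`. -/
theorem false_of_first_return (hG : G.EvenCycleFreeUpTo m) (hX : X.IsPath) (hY : Y.IsPath)
    (hZ : Z.IsPath) (hXY : X.getVert 1 ≠ Y.getVert 1) (hXZ : X.getVert 1 ≠ Z.getVert 1)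
    (hYZ : Y.getVert 1 ≠ Z.getVert 1) {y z : ℕ} (hy : y ∈ Ioc 0 Y.length)
    (hz : z ∈ Ioc 0 Z.length) (hyz : Y.getVert y = Z.getVert z)
    (hmin : Y.IsMeetLowerBound Z (y + z)) {i j : ℕ} (hi : i ∈ Ioc 0 X.length)
    (hj : j ∈ Ioc 0 y) (hit : X.getVert i = Y.getVert j)
    (hfirst : Disjoint (X.getVert '' Ioo 0 i) (Y.getVert '' Ioc 0 y ∪ Z.getVert '' Ioc 0 z))
    (hij : i + j ≤ m) (hyz_le : y + z ≤ m) (hiR : i + (z + (y - j)) ≤ m) : False := by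
  obtain ⟨hy₀, hyY⟩ := hy
  obtain ⟨hz₀, hzZ⟩ := hz
  obtain ⟨hj₀, hjy⟩ := hj
  set R := joinRev Z.getVert z Y.getVert y
  have hR : G.IsPathSeq R (z + (y - j)) :=
    (hZ.isPathSeq.mono hzZ).joinRev (hY.isPathSeq.mono hyY) hyz.symm hjy
      fun l hl l' hl' hl'Y he => by
        rcases Nat.eq_zero_or_pos l with rfl | hl₀
        · have := hY.getVert_injOn (Nat.zero_le Y.length) (hl'Y.trans hyY)
            (by rw [Y.getVert_zero, ← he, Z.getVert_zero])
          omega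
        · have := hmin l' l (by omega) (hl'Y.trans hyY) hl₀ (hl.le.trans hzZ) he.symm
          omega
  have hR₀ : R 0 = u := by simp [R, joinRev_of_le (Nat.zero_le z)]
  have hR₁ : R 1 = Z.getVert 1 := joinRev_of_le hz₀
  have hRend : R (z + (y - j)) = Y.getVert j := joinRev_add_sub hyz.symm hjy
  have hRimage : R '' Ioo 0 (z + (y - j)) ⊆ Y.getVert '' Ioc 0 y ∪ Z.getVert '' Ioc 0 z :=
    (image_joinRev_Ioo_subset hjy).trans <| union_subset subset_union_right <|
      (image_mono ((Ioo_subset_Ioo_left hj₀.le).trans Ioo_subset_Ioc_self)).trans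
        subset_union_left
  have hYR : Disjoint (Y.getVert '' Ioo 0 j) (R '' Ioo 0 (z + (y - j))) := by
    refine Disjoint.mono_right (image_joinRev_Ioo_subset hjy) (disjoint_union_right.2 ⟨?_, ?_⟩)
    · refine Set.disjoint_left.2 ?_
      rintro _ ⟨l, ⟨hl₀, hl⟩, rfl⟩ ⟨l', ⟨hl'₀, hl'⟩, he⟩
      have := hmin l l' hl₀ (by omega) hl'₀ (by omega) he.symm
      omega
    · refine Set.disjoint_left.2 ?_
      rintro _ ⟨l, ⟨hl₀, hl⟩, rfl⟩ ⟨l', ⟨hl'₀, hl'⟩, he⟩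
      have := hY.getVert_injOn (show l ≤ Y.length by omega) (show l' ≤ Y.length by omega)
        he.symm
      omega
  exact not_isCycleSplit_theta hG
    ⟨hX.isPathSeq.mono hi.2, hY.isPathSeq.mono (hjy.trans hyY), by simp, hit,
      hfirst.mono_right <|
        (image_mono (Ioo_subset_Ioc_self.trans (Ioc_subset_Ioc_right hjy))).trans
          subset_union_left, hi.1, hXY⟩
    ⟨hX.isPathSeq.mono hi.2, hR, by simp [hR₀], hit.trans hRend.symm,
      hfirst.mono_right hRimage, hi.1, hR₁ ▸ hXZ⟩
    ⟨hY.isPathSeq.mono (hjy.trans hyY), hR, by simp [hR₀], hRend.symm, hYR, hj₀,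
      hR₁ ▸ hYZ⟩
    hij hiR (by omega)

theorem false_of_third_path_meets (hG : G.EvenCycleFreeUpTo (2 * k)) (hA : A.IsPath)
    (hB : B.IsPath) (hC : C.IsPath) (hAk : A.length ≤ k) (hBk : B.length ≤ k)
    (hCk : C.length ≤ k) (hAB₁ : A.getVert 1 ≠ B.getVert 1)
    (hAC₁ : A.getVert 1 ≠ C.getVert 1) (hBC₁ : B.getVert 1 ≠ C.getVert 1) {p q : ℕ}
    (hp : p ∈ Ioc 0 A.length) (hq : q ∈ Ioc 0 B.length) (hpq : A.getVert p = B.getVert q)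
    (hAB : A.IsMeetLowerBound B (p + q)) (hAC : A.IsMeetLowerBound C (p + q))
    (hBC : B.IsMeetLowerBound C (p + q))
    (hmeet : ¬ Disjoint (C.getVert '' Ioc 0 C.length)
      (A.getVert '' Ioc 0 p ∪ B.getVert '' Ioc 0 q)) : False := by
  obtain ⟨f, hf, hfS, hfirst⟩ := exists_first_getVert_mem hmeet
  have := hp.2
  have := hq.2
  have := hf.2
  rcases hfS with ⟨α, hα, hit⟩ | ⟨β, hβ, hit⟩
  · have := hα.2
    have := hAC α f hα.1 (hα.2.trans hp.2) hf.1 hf.2 hit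
    exact hG.false_of_first_return hC hA hB hAC₁.symm hBC₁.symm hAB₁ hp hq hpq hAB hf hα
      hit.symm hfirst (by omega) (by omega) (by omega)
  · have := hβ.2
    have := hBC β f hβ.1 (hβ.2.trans hq.2) hf.1 hf.2 hit
    exact hG.false_of_first_return hC hB hA hBC₁.symm hAC₁.symm hAB₁.symm hq hp hpq.symm
      (add_comm p q ▸ hAB.symm) hf hβ hit.symm (union_comm (A.getVert '' _) _ ▸ hfirst)
      (by omega) (by omega) (by omega)

theorem false_of_third_path_avoids (hG : G.EvenCycleFreeUpTo (2 * k)) (hA : A.IsPath)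
    (hB : B.IsPath) (hC : C.IsPath) (hC₀ : 0 < C.length) (hBk : B.length ≤ k)
    (hCk : C.length ≤ k) (hAB₁ : A.getVert 1 ≠ B.getVert 1)
    (hAC₁ : A.getVert 1 ≠ C.getVert 1) (hBC₁ : B.getVert 1 ≠ C.getVert 1) {p q : ℕ}
    (hp : p ∈ Ioc 0 A.length) (hq : q ∈ Ioc 0 B.length) (hpq : A.getVert p = B.getVert q)
    (hpq_le : p ≤ q) (hAB : A.IsMeetLowerBound B (p + q))
    (havoid : Disjoint (C.getVert '' Ioc 0 C.length)
      (A.getVert '' Ioc 0 p ∪ B.getVert '' Ioc 0 q)) : False := by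
  obtain ⟨b, hb, c, hc, hbc, hBC⟩ := B.exists_isMeetLowerBound C (hq.1.trans_le hq.2) hC₀
  have hqb : q < b := by
    by_contra! hbq
    exact havoid.ne_of_mem (mem_image_of_mem _ hc)
      (mem_union_right _ (mem_image_of_mem _ ⟨hb.1, hbq⟩)) hbc.symm
  have hmeet : ¬ Disjoint (A.getVert '' Ioc 0 A.length)
      (B.getVert '' Ioc 0 b ∪ C.getVert '' Ioc 0 c) :=
    not_disjoint_iff.2 ⟨_, mem_image_of_mem _ hp,
      mem_union_left _ ⟨q, ⟨hq.1, hqb.le⟩, hpq.symm⟩⟩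
  obtain ⟨h, hh, hhS, hfirst⟩ := exists_first_getVert_mem hmeet
  have hhp : h ≤ p := by
    by_contra! hph
    exact hfirst.ne_of_mem (mem_image_of_mem _ ⟨hp.1, hph⟩)
      (mem_union_left _ ⟨q, ⟨hq.1, hqb.le⟩, hpq.symm⟩) rfl
  rcases hhS with ⟨β, hβ, hit⟩ | ⟨γ, hγ, hit⟩
  · have := hb.2
    have := hc.2
    have := hh.2
    have := hβ.2
    have := hAB h β hh.1 hh.2 hβ.1 (hβ.2.trans hb.2) hit.symm
    exact hG.false_of_first_return hA hB hC hAB₁ hAC₁ hBC₁ hb hc hbc hBC hh hβ hit.symm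
      hfirst (by omega) (by omega) (by omega)
  · exact havoid.ne_of_mem (mem_image_of_mem _ ⟨hγ.1, hγ.2.trans hc.2⟩)
      (mem_union_left _ (mem_image_of_mem _ ⟨hh.1, hhp⟩)) hit

theorem false_of_isMeetLowerBound (hG : G.EvenCycleFreeUpTo (2 * k)) (hA : A.IsPath)
    (hB : B.IsPath) (hC : C.IsPath) (hC₀ : 0 < C.length) (hAk : A.length ≤ k)
    (hBk : B.length ≤ k) (hCk : C.length ≤ k) (hAB₁ : A.getVert 1 ≠ B.getVert 1)
    (hAC₁ : A.getVert 1 ≠ C.getVert 1) (hBC₁ : B.getVert 1 ≠ C.getVert 1) {p q : ℕ}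
    (hp : p ∈ Ioc 0 A.length) (hq : q ∈ Ioc 0 B.length) (hpq : A.getVert p = B.getVert q)
    (hAB : A.IsMeetLowerBound B (p + q)) (hAC : A.IsMeetLowerBound C (p + q))
    (hBC : B.IsMeetLowerBound C (p + q)) : False := by
  by_cases havoid : Disjoint (C.getVert '' Ioc 0 C.length)
    (A.getVert '' Ioc 0 p ∪ B.getVert '' Ioc 0 q)
  · rcases le_total p q with hpq_le | hqp_le
    · exact hG.false_of_third_path_avoids hA hB hC hC₀ hBk hCk hAB₁ hAC₁ hBC₁ hp hq hpq
        hpq_le hAB havoid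
    · exact hG.false_of_third_path_avoids hB hA hC hC₀ hAk hCk hAB₁.symm hBC₁ hAC₁ hq hp
        hpq.symm hqp_le (add_comm p q ▸ hAB.symm) (union_comm (A.getVert '' _) _ ▸ havoid)
  · exact hG.false_of_third_path_meets hA hB hC hAk hBk hCk hAB₁ hAC₁ hBC₁ hp hq hpq hAB hAC
      hBC havoid

theorem false_of_three_paths (hG : G.EvenCycleFreeUpTo (2 * k)) (hA : A.IsPath)
    (hB : B.IsPath) (hC : C.IsPath) (hA₀ : 0 < A.length) (hB₀ : 0 < B.length)
    (hC₀ : 0 < C.length) (hAk : A.length ≤ k) (hBk : B.length ≤ k) (hCk : C.length ≤ k)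
    (hAB₁ : A.getVert 1 ≠ B.getVert 1) (hAC₁ : A.getVert 1 ≠ C.getVert 1)
    (hBC₁ : B.getVert 1 ≠ C.getVert 1) : False := by
  obtain ⟨p₁, hp₁, q₁, hq₁, h₁, m₁⟩ := A.exists_isMeetLowerBound B hA₀ hB₀
  obtain ⟨p₂, hp₂, q₂, hq₂, h₂, m₂⟩ := A.exists_isMeetLowerBound C hA₀ hC₀
  obtain ⟨p₃, hp₃, q₃, hq₃, h₃, m₃⟩ := B.exists_isMeetLowerBound C hB₀ hC₀
  by_cases h₁min : p₁ + q₁ ≤ p₂ + q₂ ∧ p₁ + q₁ ≤ p₃ + q₃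
  · exact hG.false_of_isMeetLowerBound hA hB hC hC₀ hAk hBk hCk hAB₁ hAC₁ hBC₁ hp₁ hq₁ h₁
      m₁ (m₂.mono h₁min.1) (m₃.mono h₁min.2)
  by_cases h₂min : p₂ + q₂ ≤ p₃ + q₃
  · exact hG.false_of_isMeetLowerBound hA hC hB hB₀ hAk hCk hBk hAC₁ hAB₁ hBC₁.symm hp₂ hq₂
      h₂ m₂ (m₁.mono (by omega)) (m₃.symm.mono h₂min)
  · exact hG.false_of_isMeetLowerBound hB hC hA hA₀ hBk hCk hAk hBC₁ hAB₁.symm hAC₁.symm hp₃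
      hq₃ h₃ m₃ (m₁.symm.mono (by omega)) (m₂.symm.mono (by omega))

theorem exists_getVert_one_eq_or_eq (hG : G.EvenCycleFreeUpTo (2 * k)) (x y : V) :
    ∃ w₁ w₂, ∀ p : G.Walk x y, p.IsPath → 0 < p.length → p.length ≤ k →
      p.getVert 1 = w₁ ∨ p.getVert 1 = w₂ := by
  by_contra! h
  obtain ⟨A, hA, hA₀, hAk, -⟩ := h x x
  obtain ⟨B, hB, hB₀, hBk, hBA, -⟩ := h (A.getVert 1) (A.getVert 1)
  obtain ⟨C, hC, hC₀, hCk, hCA, hCB⟩ := h (A.getVert 1) (B.getVert 1)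
  exact hG.false_of_three_paths hA hB hC hA₀ hB₀ hC₀ hAk hBk hCk hBA.symm hCA.symm hCB.symm

theorem encard_setOf_isPath_length_le (hG : G.EvenCycleFreeUpTo (2 * k)) :
    ∀ {n : ℕ}, n + 1 ≤ k → ∀ x y : V,
      {p : G.Walk x y | p.IsPath ∧ p.length = n + 1}.encard ≤ 2 ^ n
  | 0, _, x, y => by
    rw [pow_zero, encard_le_one_iff]
    rintro p q ⟨-, hp⟩ ⟨-, hq⟩
    refine Walk.ext_getVert_le_length (hp.trans hq.symm) fun i hi => ?_
    rw [hp] at hi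
    interval_cases i
    · simp
    · rw [p.getVert_of_length_le hp.le, q.getVert_of_length_le hq.le]
  | n + 1, hn, x, y => by
    obtain ⟨w₁, w₂, hw⟩ := hG.exists_getVert_one_eq_or_eq x y
    calc _ ≤ {q : G.Walk w₁ y | q.IsPath ∧ q.length = n + 1}.encard
          + {q : G.Walk w₂ y | q.IsPath ∧ q.length = n + 1}.encard :=
          encard_setOf_isPath_length_succ_le fun p hp hpl => hw p hp (by omega) (by omega)
      _ ≤ 2 ^ n + 2 ^ n :=
        add_le_add (encard_setOf_isPath_length_le hG (by omega) w₁ y)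
          (encard_setOf_isPath_length_le hG (by omega) w₂ y)
      _ = 2 ^ (n + 1) := by ring

end EvenCycleFreeUpTo

end SimpleGraph

theorem num_k_paths_lt_two_pow_general {V : Type*} (G : SimpleGraph V) (k : ℕ) (hk : 2 ≤ k)
    (hcyc : ∀ (x : V) (c : G.Walk x x), c.IsCycle → Even c.length → ¬ c.length ≤ 2 * k)
    (u v : V) :
    {p : G.Walk u v | p.IsPath ∧ p.length = k}.ncard < 2 ^ k := by
  obtain ⟨n, rfl⟩ : ∃ n, k = n + 1 := ⟨k - 1, by omega⟩
  have hle := SimpleGraph.EvenCycleFreeUpTo.encard_setOf_isPath_length_le hcyc le_rfl u v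
  calc _ ≤ 2 ^ n := ENat.toNat_le_of_le_natCast (by exact_mod_cast hle)
    _ < 2 ^ (n + 1) := Nat.pow_lt_pow_right (by norm_num) (by omega)

/-- In a graph with no even cycle of length at most `2k`, the number of paths of length
exactly `k` between two distinct vertices `u, v` is less than `2^k`. -/
theorem num_k_paths_lt_two_pow {V : Type*} (G : SimpleGraph V) (k : ℕ) (hk : 2 ≤ k)
    (hcyc : ∀ (x : V) (c : G.Walk x x), c.IsCycle → Even c.length → ¬ c.length ≤ 2 * k)
    (u v : V) (huv : u ≠ v) :
    {p : G.Walk u v | p.IsPath ∧ p.length = k}.ncard < 2 ^ k :=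
  num_k_paths_lt_two_pow_general G k hk hcyc u v
end

section
/- Let G be an n-vertex graph with average degree d ≥ 2 and no cycles (odd or even) of length at most 2k. Then d(d−1)^{k−1} ≤ n. -/
/-!
Deleting a vertex of degree at most one keeps `2|E|/n ≥ d` when `d ≥ 2`, so we may pass to an
induced subgraph of minimum degree at least two. There every dart `(u, v)` has `deg v - 1 ≥ 1`
non-backtracking continuations, and the uniform non-backtracking random walk preserves the
uniform distribution on darts. Its entropy after `j` steps is therefore `j` times the mean over
darts of `log (deg - 1)`, which by convexity of `x log (x - 1)` is at least `j log (d - 1)`.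
Hence there are at least `n d (d - 1)^(k-1)` non-backtracking walks of length `k`. When the girth
exceeds `2k` each of them is a path and is determined by its two endpoints, so there are at most
`n²` of them.
-/

open Finset Real

theorem ConvexOn.card_mul_map_sum_div_card_le {ι : Type*} {D : Set ℝ} {f : ℝ → ℝ}
    (hf : ConvexOn ℝ D f) {s : Finset ι} (hs : s.Nonempty) {x : ι → ℝ}
    (hx : ∀ i ∈ s, x i ∈ D) : #s * f ((∑ i ∈ s, x i) / #s) ≤ ∑ i ∈ s, f (x i) := by
  have hcard : (0 : ℝ) < #s := by exact_mod_cast hs.card_pos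
  have := hf.map_sum_le (t := s) (w := fun _ => (#s : ℝ)⁻¹) (p := x) (fun _ _ => by positivity)
    (by simp [hcard.ne']) hx
  simp only [smul_eq_mul, ← mul_sum] at this
  rw [div_eq_inv_mul]
  calc _ ≤ (#s : ℝ) * ((#s : ℝ)⁻¹ * ∑ i ∈ s, f (x i)) := by gcongr
    _ = _ := by field_simp

theorem convexOn_mul_log_sub_one : ConvexOn ℝ (Set.Ici 2) fun x => x * log (x - 1) := by
  have hsub (x : ℝ) : HasDerivAt (fun y : ℝ => y - 1) 1 x := (hasDerivAt_id' x).sub_const 1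
  have hlog (x : ℝ) (hx : 1 < x) : HasDerivAt (fun y => log (y - 1)) (1 / (x - 1)) x :=
    (hsub x).log (by linarith)
  have hderiv (x : ℝ) (hx : 1 < x) :
      HasDerivAt (fun y => y * log (y - 1)) (log (x - 1) + x / (x - 1)) x :=
    ((hasDerivAt_id' x).mul (hlog x hx)).congr_deriv (by ring)
  have hderiv2 (x : ℝ) (hx : 1 < x) :
      HasDerivAt (fun y => log (y - 1) + y / (y - 1)) ((x - 2) / (x - 1) ^ 2) x :=
    ((hlog x hx).add ((hasDerivAt_id' x).div (hsub x) (by linarith))).congr_deriv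
      (by field_simp; ring)
  refine convexOn_of_hasDerivWithinAt2_nonneg (f' := fun x => log (x - 1) + x / (x - 1))
    (f'' := fun x => (x - 2) / (x - 1) ^ 2) (convex_Ici 2)
    (fun x hx => (hderiv x (by linarith [Set.mem_Ici.1 hx])).continuousAt.continuousWithinAt)
    ?_ ?_ ?_ <;> simp only [interior_Ici, Set.mem_Ioi]
  · exact fun x hx => (hderiv x (by linarith)).hasDerivWithinAt
  · exact fun x hx => (hderiv2 x (by linarith)).hasDerivWithinAt
  · exact fun x hx => div_nonneg (by linarith) (sq_nonneg _)

section WalkEntropy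

variable {D : Type*} (s : D → Finset D)

/-- The entropy of the `j`-step random walk from `e` that moves to a uniformly chosen element
of `s` at every step. -/
noncomputable def walkEntropy : ℕ → D → ℝ
  | 0, _ => 0
  | j + 1, e => log #(s e) + (∑ f ∈ s e, walkEntropy j f) / #(s e)

variable {s}

theorem exp_walkEntropy_le (hs : ∀ e, (s e).Nonempty) {N : ℕ → D → ℝ}
    (h0 : ∀ e, 1 ≤ N 0 e) (hN : ∀ j e, ∑ f ∈ s e, N j f ≤ N (j + 1) e) (j : ℕ) (e : D) :
    exp (walkEntropy s j e) ≤ N j e := by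
  induction j generalizing e with
  | zero => simpa [walkEntropy] using h0 e
  | succ j ih =>
    have hcard : (0 : ℝ) < #(s e) := by exact_mod_cast (hs e).card_pos
    calc exp (walkEntropy s (j + 1) e)
        = #(s e) * exp ((∑ f ∈ s e, walkEntropy s j f) / #(s e)) := by
          rw [walkEntropy, exp_add, exp_log hcard]
      _ ≤ ∑ f ∈ s e, exp (walkEntropy s j f) :=
          convexOn_exp.card_mul_map_sum_div_card_le (hs e) fun _ _ => Set.mem_univ _
      _ ≤ ∑ f ∈ s e, N j f := sum_le_sum fun f _ => ih f
      _ ≤ N (j + 1) e := hN j e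

variable [Fintype D] [DecidableEq D]

theorem sum_walkEntropy (hs : ∀ f, ∑ e with f ∈ s e, (#(s e) : ℝ)⁻¹ = 1) (j : ℕ) :
    ∑ e, walkEntropy s j e = j * ∑ e, log #(s e) := by
  induction j with
  | zero => simp [walkEntropy]
  | succ j ih =>
    have hmix : ∑ e, (∑ f ∈ s e, walkEntropy s j f) / #(s e) = ∑ f, walkEntropy s j f := by
      simp_rw [sum_div, div_eq_mul_inv]
      rw [sum_comm' (t' := univ) (s' := fun f => {e | f ∈ s e}) (by simp)]
      simp [← mul_sum, hs]
    simp only [walkEntropy, sum_add_distrib, hmix, ih]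
    push_cast
    ring

/-- `hstoch` says that the uniform distribution on `D` is stationary for the walk. -/
theorem card_mul_exp_sum_log_card_le_sum (hs : ∀ e, (s e).Nonempty)
    (hstoch : ∀ f, ∑ e with f ∈ s e, (#(s e) : ℝ)⁻¹ = 1) {N : ℕ → D → ℝ}
    (h0 : ∀ e, 1 ≤ N 0 e) (hN : ∀ j e, ∑ f ∈ s e, N j f ≤ N (j + 1) e) (j : ℕ) :
    Fintype.card D * exp (j * (∑ e, log #(s e)) / Fintype.card D) ≤ ∑ e, N j e := by
  rcases isEmpty_or_nonempty D with hD | hD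
  · simp
  rw [← sum_walkEntropy hstoch, ← card_univ]
  exact (convexOn_exp.card_mul_map_sum_div_card_le univ_nonempty fun _ _ => Set.mem_univ _).trans
    (sum_le_sum fun e _ => exp_walkEntropy_le hs h0 hN j e)

end WalkEntropy

namespace SimpleGraph

variable {V : Type*} {G : SimpleGraph V}

namespace Walk

def IsNonBacktracking {u v : V} (p : G.Walk u v) : Prop := p.edges.IsChain (· ≠ ·)

theorem isNonBacktracking_cons_cons {u v w x : V} (h : G.Adj u v) (h' : G.Adj v w)
    (p : G.Walk w x) :
    (cons h (cons h' p)).IsNonBacktracking ↔ u ≠ w ∧ (cons h' p).IsNonBacktracking := by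
  simp only [IsNonBacktracking, edges_cons, List.isChain_cons_cons, ne_eq, Sym2.eq_iff]
  have := h.ne
  constructor <;> rintro ⟨h1, h2⟩ <;> refine ⟨?_, h2⟩ <;> tauto

theorem IsNonBacktracking.of_cons {u v w : V} {h : G.Adj u v} {p : G.Walk v w}
    (hp : (cons h p).IsNonBacktracking) : p.IsNonBacktracking := by
  simp only [IsNonBacktracking, edges_cons] at hp
  exact hp.tail

theorem IsNonBacktracking.isPath {u v : V} {p : G.Walk u v} (hp : p.IsNonBacktracking)
    (hlen : p.length < G.egirth) : p.IsPath := by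
  classical
  induction p with
  | nil => exact .nil
  | @cons u w v h q ih =>
    have hq : q.IsPath := ih hp.of_cons (lt_of_le_of_lt (by simp) hlen)
    refine (cons_isPath_iff h q).mpr ⟨hq, fun hu => ?_⟩
    -- Otherwise `h` followed by `q` up to its first visit of `u` is a cycle no longer than `p`.
    set r := q.takeUntil u hu
    have hr : r.IsPath := hq.takeUntil hu
    have hcyc : (cons h r).IsCycle := by
      refine (cons_isCycle_iff r h).mpr ⟨hr, fun hmem => ?_⟩
      have hsnd : u = q.snd := (hr.eq_snd_of_mem_edges (Sym2.eq_swap ▸ hmem)).trans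
        (snd_takeUntil h.ne q hu)
      cases q with
      | nil => exact h.ne (by simpa using hu)
      | cons h' q' =>
        simp only [snd_cons] at hsnd
        subst hsnd
        exact ((isNonBacktracking_cons_cons h h' q').mp hp).1 rfl
    have hlen' : ((cons h r).length : ℕ∞) ≤ (cons h q).length := by
      simpa using q.length_takeUntil_le_length hu
    exact ((egirth_le_length hcyc).trans hlen').not_gt hlen

theorem IsNonBacktracking.eq_of_length_add_length_lt_egirth {u v : V} {p q : G.Walk u v}
    (hp : p.IsNonBacktracking) (hq : q.IsNonBacktracking)
    (hlen : p.length + q.length < G.egirth) : p = q := by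
  by_contra hne
  have hp' := hp.isPath (lt_of_le_of_lt (by simp) hlen)
  have hq' := hq.isPath (lt_of_le_of_lt (by simp) hlen)
  obtain ⟨w, -, -, c, hc, hcl⟩ := hp'.exists_isCycle_length_le_add_of_ne hq' hne
  exact ((egirth_le_length hc).trans (by exact_mod_cast hcl)).not_gt hlen

def consEmbedding {u v : V} (h : G.Adj u v) : (Σ x, G.Walk v x) ↪ (Σ x, G.Walk u x) where
  toFun p := ⟨p.1, cons h p.2⟩
  inj' := by
    rintro ⟨x, p⟩ ⟨y, q⟩ hpq
    simp only [Sigma.mk.injEq] at hpq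
    obtain ⟨rfl, hpq⟩ := hpq
    simpa using hpq

@[simp]
theorem consEmbedding_apply {u v : V} (h : G.Adj u v) (p : Σ x, G.Walk v x) :
    consEmbedding h p = ⟨p.1, cons h p.2⟩ := rfl

end Walk

variable [Fintype V] [DecidableEq V] [DecidableRel G.Adj]

theorem sum_dart_snd {M : Type*} [AddCommMonoid M] (g : V → M) :
    ∑ d : G.Dart, g d.snd = ∑ v, G.degree v • g v := by
  rw [← Equiv.sum_comp (Function.Involutive.toPerm _ Dart.symm_involutive)]
  simp only [Function.Involutive.coe_toPerm, Dart.symm_toProd, Prod.snd_swap]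
  rw [← sum_fiberwise univ fun d : G.Dart => d.fst]
  refine sum_congr rfl fun v _ => ?_
  rw [sum_congr rfl fun d hd => congrArg g (mem_filter.1 hd).2, sum_const,
    dart_fst_fiber_card_eq_degree]

variable (G) in
def nonBacktrackingSucc (d : G.Dart) : Finset G.Dart := {f | f.fst = d.snd ∧ f ≠ d.symm}

theorem adj_of_mem_nonBacktrackingSucc {d f : G.Dart} (hf : f ∈ G.nonBacktrackingSucc d) :
    G.Adj d.fst f.fst := (mem_filter.1 hf).2.1 ▸ d.adj

theorem card_nonBacktrackingSucc (d : G.Dart) :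
    #(G.nonBacktrackingSucc d) = G.degree d.snd - 1 := by
  rw [nonBacktrackingSucc, filter_and, filter_ne', inter_erase, inter_univ,
    card_erase_of_mem (by simp), dart_fst_fiber_card_eq_degree]

theorem card_filter_mem_nonBacktrackingSucc (f : G.Dart) :
    #{e | f ∈ G.nonBacktrackingSucc e} = G.degree f.fst - 1 := by
  have : ({e | f ∈ G.nonBacktrackingSucc e} : Finset G.Dart) =
      (G.nonBacktrackingSucc f.symm).map ⟨Dart.symm, Dart.symm_involutive.injective⟩ := by
    ext e
    simp only [nonBacktrackingSucc, mem_filter, mem_univ, true_and, mem_map,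
      Function.Embedding.coeFn_mk]
    constructor
    · exact fun ⟨h1, h2⟩ => ⟨e.symm, ⟨h1.symm, Ne.symm h2⟩, e.symm_symm⟩
    · rintro ⟨a, ⟨h1, h2⟩, rfl⟩
      exact ⟨h1.symm, by rwa [Dart.symm_symm, ne_comm]⟩
  rw [this, card_map, card_nonBacktrackingSucc]
  rfl

theorem nonBacktrackingSucc_nonempty {d : G.Dart} (hd : 2 ≤ G.degree d.snd) :
    (G.nonBacktrackingSucc d).Nonempty := by
  rw [← card_pos, card_nonBacktrackingSucc]
  omega

theorem sum_inv_card_nonBacktrackingSucc {f : G.Dart} (hf : 2 ≤ G.degree f.fst) :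
    ∑ e with f ∈ G.nonBacktrackingSucc e, (#(G.nonBacktrackingSucc e) : ℝ)⁻¹ = 1 := by
  have hcard : ∀ e ∈ ({e | f ∈ G.nonBacktrackingSucc e} : Finset G.Dart),
      #(G.nonBacktrackingSucc e) = G.degree f.fst - 1 := fun e he => by
    rw [card_nonBacktrackingSucc, ← (mem_filter.1 (mem_filter.1 he).2).2.1]
  rw [sum_congr rfl fun e he => by rw [hcard e he], sum_const,
    card_filter_mem_nonBacktrackingSucc, nsmul_eq_mul]
  exact mul_inv_cancel₀ (by norm_cast; omega)

variable (G) in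
/-- The non-backtracking walks of length `j + 1` whose first dart is `d`, each paired with its
endpoint. -/
def nonBacktrackingWalks : ℕ → (d : G.Dart) → Finset (Σ x, G.Walk d.fst x)
  | 0, d => {⟨d.snd, .cons d.adj .nil⟩}
  | j + 1, d => (G.nonBacktrackingSucc d).attach.biUnion fun f =>
      (nonBacktrackingWalks j f).map (Walk.consEmbedding (adj_of_mem_nonBacktrackingSucc f.2))

theorem length_isNonBacktracking_snd_of_mem_nonBacktrackingWalks {j : ℕ} {d : G.Dart}
    {p : Σ x, G.Walk d.fst x} (hp : p ∈ G.nonBacktrackingWalks j d) :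
    p.2.length = j + 1 ∧ p.2.IsNonBacktracking ∧ p.2.snd = d.snd := by
  induction j generalizing d with
  | zero =>
    obtain rfl := mem_singleton.1 hp
    simp [Walk.IsNonBacktracking]
  | succ j ih =>
    simp only [nonBacktrackingWalks, mem_biUnion, mem_attach, true_and, mem_map] at hp
    obtain ⟨⟨f, hf⟩, ⟨x, q⟩, hq, rfl⟩ := hp
    obtain ⟨hlen, hnb, hsnd⟩ := ih hq
    obtain ⟨hfd, hfne⟩ := mem_filter.1 hf |>.2
    dsimp only at hlen hnb hsnd
    refine ⟨by simp [hlen], ?_, by simp [hfd]⟩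
    cases q with
    | nil => simp at hlen
    | cons h' q' =>
      simp only [Walk.snd_cons] at hsnd
      subst hsnd
      refine (Walk.isNonBacktracking_cons_cons _ _ _).2 ⟨fun h => hfne ?_, hnb⟩
      exact Dart.ext _ _ (Prod.ext hfd h.symm)

theorem card_nonBacktrackingWalks_succ (j : ℕ) (d : G.Dart) :
    #(G.nonBacktrackingWalks (j + 1) d) =
      ∑ f ∈ G.nonBacktrackingSucc d, #(G.nonBacktrackingWalks j f) := by
  rw [nonBacktrackingWalks, card_biUnion]
  · simp only [card_map]
    exact sum_attach _ fun f => #(G.nonBacktrackingWalks j f)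
  rintro ⟨f, hf⟩ - ⟨f', hf'⟩ - hne
  change Disjoint _ _
  refine Finset.disjoint_left.2 fun p hp hp' => hne ?_
  simp only [mem_map] at hp hp'
  obtain ⟨⟨x, q⟩, hq, rfl⟩ := hp
  obtain ⟨⟨x', q'⟩, hq', hqq'⟩ := hp'
  have h1 := (length_isNonBacktracking_snd_of_mem_nonBacktrackingWalks hq).2.2
  have h2 := (length_isNonBacktracking_snd_of_mem_nonBacktrackingWalks hq').2.2
  have := congrArg (fun p : Σ x, G.Walk d.fst x => p.2.getVert 2) hqq'
  simp only [Walk.consEmbedding_apply, Walk.getVert_cons_succ] at this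
  refine Subtype.ext (Dart.ext _ _ (Prod.ext ?_ ?_))
  · exact (mem_filter.1 hf).2.1.trans (mem_filter.1 hf').2.1.symm
  · exact h1.symm.trans (this.symm.trans h2)

theorem sum_card_nonBacktrackingWalks_le {j : ℕ} (hG : 2 * (j + 1) < G.egirth) :
    ∑ d, #(G.nonBacktrackingWalks j d) ≤ Fintype.card V * Fintype.card V := by
  rw [← card_sigma, ← Fintype.card_prod, ← card_univ]
  refine card_le_card_of_injOn (fun p => (p.1.fst, p.2.1)) (fun _ _ => mem_coe.2 (mem_univ _)) ?_
  rintro ⟨⟨⟨a, b⟩, _⟩, x, p⟩ hp ⟨⟨⟨a', b'⟩, _⟩, x', p'⟩ hp' h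
  simp only [Prod.mk.injEq] at h
  obtain ⟨rfl, rfl⟩ := h
  obtain ⟨hlen, hnb, hsnd⟩ :=
    length_isNonBacktracking_snd_of_mem_nonBacktrackingWalks (mem_sigma.1 hp).2
  obtain ⟨hlen', hnb', hsnd'⟩ :=
    length_isNonBacktracking_snd_of_mem_nonBacktrackingWalks (mem_sigma.1 hp').2
  obtain rfl : p = p' := hnb.eq_of_length_add_length_lt_egirth hnb' <| by
    rw [hlen, hlen']
    convert hG using 1
    push_cast
    ring
  obtain rfl : b = b' := hsnd.symm.trans hsnd'
  rfl

theorem sum_degree_mul_pow_le_sum_card_nonBacktrackingWalks [Nonempty V]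
    (hdeg : ∀ v, 2 ≤ G.degree v) (j : ℕ) :
    (∑ v, (G.degree v : ℝ)) * ((∑ v, (G.degree v : ℝ)) / Fintype.card V - 1) ^ j ≤
      ∑ d, (#(G.nonBacktrackingWalks j d) : ℝ) := by
  set M : ℝ := ∑ v, (G.degree v : ℝ)
  have hn : (0 : ℝ) < Fintype.card V := Nat.cast_pos.2 Fintype.card_pos
  have hdeg' (v : V) : (2 : ℝ) ≤ G.degree v := by exact_mod_cast hdeg v
  have hM : 2 * Fintype.card V ≤ M := by
    simpa [mul_comm] using sum_le_sum fun v (_ : v ∈ univ) => hdeg' v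
  have hM1 : 1 ≤ M / Fintype.card V - 1 := by
    rw [le_sub_iff_add_le, one_add_one_eq_two, le_div_iff₀ hn]
    exact hM
  have hcount := card_mul_exp_sum_log_card_le_sum (s := G.nonBacktrackingSucc)
    (fun d => nonBacktrackingSucc_nonempty (hdeg d.snd))
    (fun f => sum_inv_card_nonBacktrackingSucc (hdeg f.fst))
    (N := fun j d => #(G.nonBacktrackingWalks j d)) (fun d => by simp [nonBacktrackingWalks])
    (fun j d => by rw [card_nonBacktrackingWalks_succ]; push_cast; rfl) j
  rw [dart_card_eq_sum_degrees, Nat.cast_sum] at hcount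
  have hlog : M * log (M / Fintype.card V - 1) ≤ ∑ d, log #(G.nonBacktrackingSucc d) := by
    simp only [card_nonBacktrackingSucc, Nat.cast_sub (one_le_two.trans (hdeg _)), Nat.cast_one,
      sum_dart_snd fun v => log ((G.degree v : ℝ) - 1), nsmul_eq_mul]
    have := convexOn_mul_log_sub_one.card_mul_map_sum_div_card_le univ_nonempty
      fun v (_ : v ∈ univ) => Set.mem_Ici.2 (hdeg' v)
    rwa [card_univ, ← mul_assoc, mul_div_cancel₀ _ hn.ne'] at this
  calc M * (M / Fintype.card V - 1) ^ j
      = M * exp (j * log (M / Fintype.card V - 1)) := by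
        rw [← log_pow, exp_log (pow_pos (by linarith) _)]
    _ ≤ M * exp (j * (∑ d, log #(G.nonBacktrackingSucc d)) / M) := by
        rw [mul_div_assoc]
        gcongr
        rw [le_div_iff₀ (by linarith), mul_comm]
        exact hlog
    _ ≤ ∑ d, (#(G.nonBacktrackingWalks j d) : ℝ) := hcount

theorem mul_sub_one_pow_le_card [Nonempty V] (hdeg : ∀ v, 2 ≤ G.degree v) {j : ℕ}
    (hG : 2 * (j + 1) < G.egirth) {c : ℝ} (hc : 1 ≤ c)
    (hcV : c * Fintype.card V ≤ ∑ v, (G.degree v : ℝ)) :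
    c * (c - 1) ^ j ≤ Fintype.card V := by
  have hV : (0 : ℝ) < Fintype.card V := Nat.cast_pos.2 Fintype.card_pos
  have hcd : c ≤ (∑ v, (G.degree v : ℝ)) / Fintype.card V := (le_div_iff₀ hV).2 hcV
  calc c * (c - 1) ^ j
      ≤ (∑ v, (G.degree v : ℝ)) / Fintype.card V *
          ((∑ v, (G.degree v : ℝ)) / Fintype.card V - 1) ^ j := by
        gcongr
    _ ≤ Fintype.card V := by
        rw [div_mul_eq_mul_div, div_le_iff₀ hV, ← sq]
        refine (sum_degree_mul_pow_le_sum_card_nonBacktrackingWalks hdeg j).trans ?_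
        exact_mod_cast (sum_card_nonBacktrackingWalks_le hG).trans_eq (sq _).symm

theorem card_neighborFinset_inter_le_card_erase (t : Finset V) (v : V) :
    #(G.neighborFinset v ∩ t) ≤ #(t.erase v) :=
  card_le_card fun _ hu => mem_erase.2 ⟨(G.ne_of_adj ((mem_neighborFinset _ _ _).1
    (mem_inter.1 hu).1)).symm, (mem_inter.1 hu).2⟩

theorem sum_card_neighborFinset_inter_erase {t : Finset V} {v : V} (hv : v ∈ t) :
    ∑ u ∈ t.erase v, #(G.neighborFinset u ∩ t.erase v) + 2 * #(G.neighborFinset v ∩ t) =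
      ∑ u ∈ t, #(G.neighborFinset u ∩ t) := by
  have hterm : ∀ u ∈ t.erase v, #(G.neighborFinset u ∩ t) =
      #(G.neighborFinset u ∩ t.erase v) + if u ∈ G.neighborFinset v then 1 else 0 := by
    intro u hu
    have hmem : v ∈ G.neighborFinset u ∩ t ↔ u ∈ G.neighborFinset v := by
      simp [hv, adj_comm]
    rw [inter_erase, card_erase_eq_ite, if_congr hmem rfl rfl]
    split_ifs with h
    · have := card_pos.2 ⟨v, hmem.2 h⟩
      omega
    · rfl
  have hcount : ∑ u ∈ t.erase v, (if u ∈ G.neighborFinset v then 1 else 0) =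
      #(G.neighborFinset v ∩ t) := by
    rw [sum_boole, filter_mem_eq_inter, inter_comm, inter_erase, erase_eq_of_notMem (by simp)]
    simp
  rw [← sum_erase_add _ _ hv, sum_congr rfl hterm, sum_add_distrib, hcount]
  ring

theorem degree_induce_finset (t : Finset V) (v : (t : Set V)) :
    (G.induce t).degree v = #(G.neighborFinset v ∩ t) := by
  rw [← card_neighborFinset_eq_degree, ← card_map (.subtype _)]
  congr 1
  ext
  simp

theorem exists_two_le_card_neighborFinset_inter {c : ℝ} (hc : 2 ≤ c) {s : Finset V}
    (hs : s.Nonempty) (h : c * #s ≤ ∑ u ∈ s, (#(G.neighborFinset u ∩ s) : ℝ)) :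
    ∃ t : Finset V, t.Nonempty ∧ (∀ v ∈ t, 2 ≤ #(G.neighborFinset v ∩ t)) ∧
      c * #t ≤ ∑ u ∈ t, (#(G.neighborFinset u ∩ t) : ℝ) := by
  induction s using Finset.strongInduction with
  | H s ih =>
  by_cases hmin : ∀ v ∈ s, 2 ≤ #(G.neighborFinset v ∩ s)
  · exact ⟨s, hs, hmin, h⟩
  push Not at hmin
  obtain ⟨v, hv, hdeg⟩ := hmin
  have hsum : ∑ u ∈ s.erase v, (#(G.neighborFinset u ∩ s.erase v) : ℝ) +
      2 * #(G.neighborFinset v ∩ s) = ∑ u ∈ s, (#(G.neighborFinset u ∩ s) : ℝ) := by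
    exact_mod_cast sum_card_neighborFinset_inter_erase hv
  have hcard : (#(s.erase v) : ℝ) + 1 = #s := by exact_mod_cast card_erase_add_one hv
  have hdeg1 : (#(G.neighborFinset v ∩ s) : ℝ) ≤ 1 := by exact_mod_cast Nat.le_of_lt_succ hdeg
  rw [← hcard, ← hsum] at h
  refine ih _ (erase_ssubset hv) (nonempty_iff_ne_empty.2 fun he => ?_) (by linarith)
  -- `s = {v}` is impossible: its degree sum is `0 < c`.
  have hdeg0 : (#(G.neighborFinset v ∩ s) : ℝ) ≤ #(s.erase v) := by
    exact_mod_cast card_neighborFinset_inter_le_card_erase s v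
  simp only [he, sum_empty, card_empty, Nat.cast_zero] at h hdeg0
  linarith

theorem exists_induce_two_le_degree {c : ℝ} (hc : 2 ≤ c) [Nonempty V]
    (h : c * Fintype.card V ≤ ∑ v, (G.degree v : ℝ)) :
    ∃ t : Finset V, t.Nonempty ∧ (∀ v, 2 ≤ (G.induce (t : Set V)).degree v) ∧
      c * Fintype.card (t : Set V) ≤ ∑ v, ((G.induce (t : Set V)).degree v : ℝ) := by
  obtain ⟨t, htne, htdeg, htsum⟩ :=
    exists_two_le_card_neighborFinset_inter (G := G) hc univ_nonempty (by simpa using h)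
  refine ⟨t, htne, fun v => ?_, ?_⟩
  · rw [degree_induce_finset]
    exact htdeg v v.2
  · simp only [degree_induce_finset]
    simpa [sum_attach t fun u => (#(G.neighborFinset u ∩ t) : ℝ)] using htsum

end SimpleGraph

open SimpleGraph in
theorem moore_bound_average_degree_general {V : Type*} [Fintype V] (G : SimpleGraph V)
    [DecidableRel G.Adj] (k : ℕ) (n : ℕ) (hn : n = Fintype.card V) (d : ℝ)
    (hd : d = 2 * G.edgeFinset.card / n) (hd2 : 2 ≤ d)
    (hcyc : ∀ (x : V) (c : G.Walk x x), c.IsCycle → ¬ c.length ≤ 2 * k) :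
    d * (d - 1) ^ (k - 1) ≤ n := by
  classical
  subst hn
  have hV : 0 < Fintype.card V := Nat.pos_of_ne_zero fun h => by simp [h] at hd; linarith
  have : Nonempty V := Fintype.card_pos_iff.1 hV
  have hsum : d * Fintype.card V ≤ ∑ v, (G.degree v : ℝ) := by
    rw [hd, div_mul_cancel₀ _ (by positivity)]
    exact_mod_cast (sum_degrees_eq_twice_card_edges G).ge
  -- For `k = 0` this reads `2 < egirth`, which holds as cycles have length at least three.
  have hgirth : 2 * ((k - 1 : ℕ) + 1) < G.egirth := by
    refine (ENat.add_one_le_iff (by exact_mod_cast ENat.natCast_ne_top (2 * (k - 1 + 1)))).1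
      (le_egirth.2 fun x c hc => ?_)
    have := hc.three_le_length
    have := hcyc x c hc
    exact_mod_cast (by omega : 2 * (k - 1 + 1) + 1 ≤ c.length)
  obtain ⟨t, htne, htdeg, htsum⟩ := G.exists_induce_two_le_degree hd2 hsum
  have : Nonempty (t : Set V) := htne.to_subtype
  calc d * (d - 1) ^ (k - 1)
      ≤ Fintype.card (t : Set V) :=
        mul_sub_one_pow_le_card htdeg
          (hgirth.trans_le (IsContained.egirth_le ⟨(Embedding.induce _).toCopy⟩))
          (by linarith) htsum
    _ ≤ Fintype.card V := by exact_mod_cast Fintype.card_subtype_le _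

/-- Irregular Moore bound (Alon–Hoory–Linial): an `n`-vertex graph with average degree
`d ≥ 2` and no cycle of length at most `2k` satisfies `d(d-1)^{k-1} ≤ n`. -/
theorem moore_bound_average_degree {V : Type*} [Fintype V] (G : SimpleGraph V)
    [DecidableRel G.Adj] (k : ℕ) (hk : 1 ≤ k) (n : ℕ) (hn : n = Fintype.card V) (d : ℝ)
    (hd : d = 2 * G.edgeFinset.card / n) (hd2 : 2 ≤ d)
    (hcyc : ∀ (x : V) (c : G.Walk x x), c.IsCycle → ¬ c.length ≤ 2 * k) :
    d * (d - 1) ^ (k - 1) ≤ n :=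
  moore_bound_average_degree_general G k n hn d hd hd2 hcyc
end

section
/- Let G be a graph with no even cycle of length at most 2k, and let T be a breadth-first search tree rooted at a vertex v. Then for each r ≤ k, no vertex at distance r from v is adjacent to two vertices at distance r−1 from v. -/
/-!
Take shortest walks from `x` to `v` through `y₁` and through `y₂`. If `y₁ ≠ y₂` they are distinct
shortest walks of length `r`, and two distinct paths between the same endpoints contain a cycle made
of a subwalk of each. Subwalks of shortest walks are again shortest, so both halves of that cycle
have the same length `m ≤ r`: the cycle is even of length `2m ≤ 2k`.
-/

namespace SimpleGraph

variable {V : Type*} {G : SimpleGraph V} {u v x y : V}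

theorem exists_even_isCycle_of_ne_of_length_eq_dist {p q : G.Walk u v}
    (hp : p.length = G.dist u v) (hq : q.length = G.dist u v) (hpq : p ≠ q) :
    ∃ (w : V) (c : G.Walk w w), c.IsCycle ∧ Even c.length ∧ c.length ≤ 2 * G.dist u v := by
  obtain ⟨u', v', p', q', hp', hq', hc⟩ :=
    (p.isPath_of_length_eq_dist hp).exists_isCycle_of_ne (q.isPath_of_length_eq_dist hq) hpq
  have hp'_len : p'.length = G.dist u' v' := length_eq_dist_of_subwalk hp hp'
  have hq'_len : q'.length = G.dist u' v' := length_eq_dist_of_subwalk hq hq'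
  have hp'_le : p'.length ≤ p.length := Walk.length_le_of_isSubwalk hp'
  refine ⟨u', _, hc, ?_, ?_⟩
  · rw [Walk.length_append, Walk.length_reverse, hp'_len, hq'_len]
    exact ⟨_, rfl⟩
  · rw [Walk.length_append, Walk.length_reverse]
    omega

theorem exists_walk_snd_eq_length_eq_dist (hxy : G.Adj x y)
    (hdist : G.dist v y + 1 = G.dist v x) :
    ∃ p : G.Walk x v, p.snd = y ∧ p.length = G.dist x v := by
  have hvy : G.Reachable v y :=
    (Reachable.of_dist_ne_zero (by omega : G.dist v x ≠ 0)).trans hxy.reachable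
  obtain ⟨p, hp⟩ := hvy.exists_walk_length_eq_dist
  refine ⟨.cons hxy p.reverse, Walk.snd_cons .., ?_⟩
  rw [Walk.length_cons, Walk.length_reverse, hp, hdist, dist_comm]

end SimpleGraph

open SimpleGraph

theorem bfs_no_two_parents_general {V : Type*} (G : SimpleGraph V) (k : ℕ)
    (hcyc : ∀ (x : V) (c : G.Walk x x), c.IsCycle → Even c.length → ¬ c.length ≤ 2 * k)
    (v : V) (r : ℕ) (hr1 : 1 ≤ r) (hrk : r ≤ k)
    (x y₁ y₂ : V) (hx : G.dist v x = r)
    (hy₁ : G.dist v y₁ = r - 1) (hy₂ : G.dist v y₂ = r - 1)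
    (ha₁ : G.Adj x y₁) (ha₂ : G.Adj x y₂) :
    y₁ = y₂ := by
  obtain ⟨p₁, rfl, hp₁⟩ := exists_walk_snd_eq_length_eq_dist (v := v) ha₁ (by omega)
  obtain ⟨p₂, rfl, hp₂⟩ := exists_walk_snd_eq_length_eq_dist (v := v) ha₂ (by omega)
  by_contra hne
  obtain ⟨w, c, hc, heven, hlen⟩ :=
    exists_even_isCycle_of_ne_of_length_eq_dist hp₁ hp₂ (fun h ↦ hne (congrArg Walk.snd h))
  rw [dist_comm, hx] at hlen
  exact hcyc w c hc heven (by omega)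

/-- In a graph with no even cycle of length at most `2k`, no vertex at distance `r ≤ k`
from a root `v` is adjacent to two distinct vertices at distance `r - 1` from `v`. -/
theorem bfs_no_two_parents {V : Type*} (G : SimpleGraph V) (k : ℕ) (hk : 2 ≤ k)
    (hcyc : ∀ (x : V) (c : G.Walk x x), c.IsCycle → Even c.length → ¬ c.length ≤ 2 * k)
    (v : V) (r : ℕ) (hr1 : 1 ≤ r) (hrk : r ≤ k)
    (x y₁ y₂ : V) (hx : G.dist v x = r)
    (hy₁ : G.dist v y₁ = r - 1) (hy₂ : G.dist v y₂ = r - 1)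
    (ha₁ : G.Adj x y₁) (ha₂ : G.Adj x y₂) :
    y₁ = y₂ :=
  bfs_no_two_parents_general G k hcyc v r hr1 hrk x y₁ y₂ hx hy₁ hy₂ ha₁ ha₂
end

section
/- Let G be a d-regular n-vertex graph with no even cycle of length at most 2k. Then 1 + d + d(d−2) + d(d−2)² + ⋯ + d(d−2)^{k−1} ≤ n; in particular d < n^{1/k} + 2. -/
/-!
Fix a root `r` and let `S i` be the sphere of radius `i` around it. If two distinct vertices of
`S j` had a common neighbour at distance at least `j` from `r`, then walking both of them back
towards `r` until the two walks meet closes up an even cycle of length at most `2 j + 2`. For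
`j < k` this is excluded, so a vertex of `S i` (`i < k`) has at most one neighbour in `S (i - 1)`
and at most one in `S i`, hence at least `d - 2` in `S (i + 1)`, and distinct vertices of `S i`
share no neighbour in `S (i + 1)`. Thus `|S (i + 1)| ≥ (d - 2) |S i|` with `|S 1| = d`, and
`|S 0| + ⋯ + |S k| ≤ n` gives the bound; the second claim follows from `(d - 2)^k` being smaller
than its left-hand side.
-/

open Finset

namespace SimpleGraph

variable {V : Type*} {G : SimpleGraph V} {r : V}

lemma Adj.edist_le_edist_add_one {v w : V} (h : G.Adj v w) :
    G.edist v r ≤ G.edist w r + 1 :=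
  calc G.edist v r ≤ G.edist v w + G.edist w r := G.edist_triangle
    _ = G.edist w r + 1 := by rw [edist_eq_one_iff_adj.mpr h, add_comm]

lemma exists_adj_edist_eq_of_edist_eq_succ {v : V} {m : ℕ} (h : G.edist v r = m + 1) :
    ∃ v', G.Adj v v' ∧ G.edist v' r = m := by
  obtain ⟨p, hp⟩ := exists_walk_of_edist_eq_coe (k := m + 1) (by exact_mod_cast h)
  cases p with
  | nil => simp at hp
  | @cons _ v' _ hadj q =>
    refine ⟨v', hadj, le_antisymm ?_ ?_⟩
    · simpa [show q.length = m by simpa using hp] using G.edist_le q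
    · have := hadj.edist_le_edist_add_one (r := r)
      rw [h] at this
      exact (ENat.add_le_add_iff_right ENat.one_ne_top).mp this

lemma exists_even_cycle_of_isPath_of_edist_eq (m : ℕ) {u w : V} (t : G.Walk u w)
    (ht : t.IsPath) (hne : u ≠ w) (hu : G.edist u r = m) (hw : G.edist w r = m)
    (hsupp : ∀ x ∈ t.support, (m : ℕ∞) ≤ G.edist x r) (heven : Even t.length) :
    ∃ (x : V) (c : G.Walk x x), c.IsCycle ∧ Even c.length ∧ c.length ≤ t.length + 2 * m := by
  induction m generalizing u w with
  | zero => exact absurd ((edist_eq_zero_iff.mp hu).trans (edist_eq_zero_iff.mp hw).symm) hne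
  | succ m ih =>
    obtain ⟨u', huu', hu'⟩ := exists_adj_edist_eq_of_edist_eq_succ (by exact_mod_cast hu)
    obtain ⟨w', hww', hw'⟩ := exists_adj_edist_eq_of_edist_eq_succ (by exact_mod_cast hw)
    have not_mem {y : V} (hy : G.edist y r = m) : y ∉ t.support := fun hyt => by
      have := hsupp y hyt
      rw [hy] at this
      norm_cast at this
      omega
    have hu't := not_mem hu'
    have hw't := not_mem hw'
    by_cases hu'w' : u' = w'
    · subst hu'w'
      refine ⟨u', Walk.cons huu'.symm (t.concat hww'), ?_, ?_, ?_⟩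
      · rw [Walk.cons_isCycle_iff]
        refine ⟨ht.concat hu't hww', fun he => ?_⟩
        simp only [Walk.edges_concat, List.concat_eq_append, List.mem_append, List.mem_singleton,
          Sym2.eq_iff] at he
        grind [Walk.fst_mem_support_of_mem_edges]
      · simpa [add_assoc] using heven.add even_two
      · simp only [Walk.length_cons, Walk.length_concat]
        omega
    · have ht' : (Walk.cons huu'.symm (t.concat hww')).IsPath :=
        (ht.concat hw't hww').cons (by simp [Walk.support_concat, hu't, hu'w'])
      have hsupp' :
          ∀ x ∈ (Walk.cons huu'.symm (t.concat hww')).support, (m : ℕ∞) ≤ G.edist x r := by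
        intro x hx
        simp only [Walk.support_cons, Walk.support_concat, List.mem_cons, List.mem_append,
          List.not_mem_nil, or_false] at hx
        rcases hx with rfl | hx | rfl
        · rw [hu']
        · exact le_trans (by norm_cast; omega) (hsupp x hx)
        · rw [hw']
      obtain ⟨x, c, hc, hce, hcl⟩ :=
        ih _ ht' hu'w' hu' hw' hsupp' (by simpa [add_assoc] using heven.add even_two)
      refine ⟨x, c, hc, hce, ?_⟩
      simp only [Walk.length_cons, Walk.length_concat] at hcl
      omega

variable (G) in
def NoEvenCycleOfLengthLE (L : ℕ) : Prop :=
  ∀ (x : V) (c : G.Walk x x), c.IsCycle → Even c.length → ¬ c.length ≤ L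

lemma eq_of_adj_of_adj_of_edist_eq {k j : ℕ} (hG : G.NoEvenCycleOfLengthLE (2 * k))
    (hj : j < k) {u w v : V} (hu : G.edist u r = j) (hw : G.edist w r = j)
    (hv : (j : ℕ∞) ≤ G.edist v r) (huv : G.Adj u v) (hwv : G.Adj w v) : u = w := by
  by_contra hne
  let t : G.Walk u w := Walk.cons huv (Walk.cons hwv.symm Walk.nil)
  have ht : t.IsPath := by simp [t, hne, huv.ne, hwv.ne']
  have hsupp : ∀ x ∈ t.support, (j : ℕ∞) ≤ G.edist x r := by
    simp only [t, Walk.support_cons, Walk.support_nil, List.mem_cons, List.not_mem_nil, or_false]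
    rintro x (rfl | rfl | rfl) <;> simp_all
  obtain ⟨x, c, hc, hce, hcl⟩ :=
    exists_even_cycle_of_isPath_of_edist_eq j t ht hne hu hw hsupp (by simp [t])
  exact hG x c hc hce (by simp only [t, Walk.length_cons, Walk.length_nil] at hcl; omega)

section Spheres

variable [Fintype V]

variable (G r) in
noncomputable def sphere (i : ℕ) : Finset V := {v | G.edist v r = i}

lemma mem_sphere {i : ℕ} {v : V} : v ∈ G.sphere r i ↔ G.edist v r = i := by
  simp [sphere]

lemma sphere_zero : G.sphere r 0 = {r} := by
  ext v
  simp [mem_sphere, edist_eq_zero_iff]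

lemma card_sphere_one [DecidableRel G.Adj] : #(G.sphere r 1) = G.degree r := by
  rw [← card_neighborFinset_eq_degree]
  congr 1
  ext v
  simp [mem_sphere, edist_eq_one_iff_adj, adj_comm]

lemma sum_card_sphere_le_card (m : ℕ) : ∑ i ∈ range m, #(G.sphere r i) ≤ Fintype.card V := by
  classical
  rw [← card_biUnion fun i _ j _ hij => Finset.disjoint_left.2 fun v hi hj =>
    hij (by simpa using (mem_sphere.1 hi).symm.trans (mem_sphere.1 hj))]
  exact card_le_univ _

variable [DecidableRel G.Adj] {k : ℕ}

lemma card_adj_sphere_le_one (hG : G.NoEvenCycleOfLengthLE (2 * k)) {j : ℕ} (hj : j < k)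
    {v : V} (hv : (j : ℕ∞) ≤ G.edist v r) : #{u ∈ G.sphere r j | G.Adj u v} ≤ 1 :=
  card_le_one.2 fun _ hu _ hw => by
    simp only [mem_filter, mem_sphere] at hu hw
    exact eq_of_adj_of_adj_of_edist_eq hG hj hu.1 hw.1 hv hu.2 hw.2

lemma degree_sub_two_le_card_adj_sphere_succ (hG : G.NoEvenCycleOfLengthLE (2 * k)) {i : ℕ}
    (hi : i < k) {v : V} (hv : v ∈ G.sphere r i) :
    G.degree v - 2 ≤ #{w ∈ G.sphere r (i + 1) | G.Adj v w} := by
  classical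
  have hcover : G.neighborFinset v ⊆ {u ∈ G.sphere r (i - 1) | G.Adj u v} ∪
      {u ∈ G.sphere r i | G.Adj u v} ∪ {w ∈ G.sphere r (i + 1) | G.Adj v w} := by
    intro y hy
    rw [mem_neighborFinset] at hy
    have hyv := hy.symm.edist_le_edist_add_one (r := r)
    have hvy := hy.edist_le_edist_add_one (r := r)
    rw [mem_sphere.1 hv] at hyv hvy
    obtain ⟨j, hj⟩ := ENat.ne_top_iff_exists.1 (ne_top_of_le_ne_top (by simp) hyv)
    rw [← hj] at hyv hvy
    norm_cast at hyv hvy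
    simp only [mem_union, mem_filter, mem_sphere, ← hj, Nat.cast_inj, hy, hy.symm, and_true]
    omega
  have hle_one {j : ℕ} (hji : j ≤ i) : #{u ∈ G.sphere r j | G.Adj u v} ≤ 1 :=
    card_adj_sphere_le_one hG (by omega) (by rw [mem_sphere.1 hv]; exact_mod_cast hji)
  have : G.degree v ≤ 1 + 1 + #{w ∈ G.sphere r (i + 1) | G.Adj v w} :=
    calc G.degree v = #(G.neighborFinset v) := (card_neighborFinset_eq_degree G v).symm
      _ ≤ _ := card_le_card hcover
      _ ≤ #{u ∈ G.sphere r (i - 1) | G.Adj u v} + #{u ∈ G.sphere r i | G.Adj u v} +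
          #{w ∈ G.sphere r (i + 1) | G.Adj v w} :=
        (card_union_le _ _).trans (Nat.add_le_add_right (card_union_le _ _) _)
      _ ≤ _ := by gcongr <;> exact hle_one (by omega)
  omega

lemma card_sphere_mul_le (hG : G.NoEvenCycleOfLengthLE (2 * k)) {d : ℕ}
    (hreg : G.IsRegularOfDegree d) {i : ℕ} (hi : i < k) :
    #(G.sphere r i) * (d - 2) ≤ #(G.sphere r (i + 1)) := by
  simpa using card_mul_le_card_mul (fun v w => G.Adj v w)
    (fun v hv => hreg v ▸ degree_sub_two_le_card_adj_sphere_succ hG hi hv)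
    (fun w hw => card_adj_sphere_le_one hG hi (by rw [mem_sphere.1 hw]; norm_cast; omega))

lemma mul_pow_le_card_sphere_succ (hG : G.NoEvenCycleOfLengthLE (2 * k)) {d : ℕ}
    (hreg : G.IsRegularOfDegree d) :
    ∀ j < k, d * (d - 2) ^ j ≤ #(G.sphere r (j + 1))
  | 0, _ => by simp [card_sphere_one, hreg r]
  | j + 1, hj => calc
      d * (d - 2) ^ (j + 1) = d * (d - 2) ^ j * (d - 2) := by ring
      _ ≤ #(G.sphere r (j + 1)) * (d - 2) :=
        Nat.mul_le_mul_right _ (mul_pow_le_card_sphere_succ hG hreg j (by omega))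
      _ ≤ _ := card_sphere_mul_le hG hreg hj

lemma one_add_mul_geom_sum_le_card [Nonempty V] (hG : G.NoEvenCycleOfLengthLE (2 * k))
    {d : ℕ} (hreg : G.IsRegularOfDegree d) :
    1 + d * ∑ i ∈ range k, (d - 2) ^ i ≤ Fintype.card V := by
  obtain ⟨r⟩ := ‹Nonempty V›
  calc 1 + d * ∑ i ∈ range k, (d - 2) ^ i
      ≤ ∑ i ∈ range k, #(G.sphere r (i + 1)) + #(G.sphere r 0) := by
        rw [mul_sum, add_comm, sphere_zero, card_singleton]
        gcongr with i hi
        exact mul_pow_le_card_sphere_succ hG hreg i (mem_range.1 hi)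
    _ = ∑ i ∈ range (k + 1), #(G.sphere r i) :=
        (sum_range_succ' (fun i => #(G.sphere r i)) k).symm
    _ ≤ Fintype.card V := sum_card_sphere_le_card _

end Spheres

end SimpleGraph

lemma pow_sub_two_lt_one_add_mul_geom_sum (d : ℕ) {k : ℕ} (hk : k ≠ 0) :
    (d - 2) ^ k < 1 + d * ∑ i ∈ range k, (d - 2) ^ i := by
  obtain ⟨j, rfl⟩ := Nat.exists_eq_succ_of_ne_zero hk
  calc (d - 2) ^ (j + 1) = (d - 2) * (d - 2) ^ j := pow_succ' _ _
    _ ≤ d * ∑ i ∈ range (j + 1), (d - 2) ^ i := by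
        gcongr
        · omega
        · exact single_le_sum (fun _ _ => Nat.zero_le _) (self_mem_range_succ j)
    _ < _ := Nat.lt_one_add_iff.2 le_rfl

lemma lt_rpow_inv_add_two_of_pow_sub_two_lt {d n k : ℕ} (hk : k ≠ 0) (h : (d - 2) ^ k < n) :
    (d : ℝ) < (n : ℝ) ^ (1 / (k : ℝ)) + 2 := by
  rcases le_or_gt d 2 with hd | hd
  · have : (d : ℝ) ≤ 2 := by exact_mod_cast hd
    have : 0 < (n : ℝ) ^ (1 / (k : ℝ)) :=
      Real.rpow_pos_of_pos (by exact_mod_cast (Nat.zero_le _).trans_lt h) _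
    linarith
  · have : ((d - 2 : ℕ) : ℝ) < (n : ℝ) ^ (1 / (k : ℝ)) := by
      rw [one_div, Real.lt_rpow_inv_iff_of_pos (Nat.cast_nonneg _) (Nat.cast_nonneg _)
        (by positivity), Real.rpow_natCast]
      exact_mod_cast h
    push_cast [hd.le] at this
    linarith

/-- A `d`-regular `n`-vertex graph with no even cycle of length at most `2k` satisfies
`1 + d + d(d−2) + ⋯ + d(d−2)^{k−1} ≤ n`, and in particular `d < n^{1/k} + 2`. -/
theorem regular_moore_type_bound {V : Type*} [Fintype V] [Nonempty V] (G : SimpleGraph V)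
    [DecidableRel G.Adj] (k : ℕ) (hk : 2 ≤ k) (n : ℕ) (hn : n = Fintype.card V)
    (d : ℕ) (hreg : G.IsRegularOfDegree d)
    (hcyc : ∀ (x : V) (c : G.Walk x x), c.IsCycle → Even c.length → ¬ c.length ≤ 2 * k) :
    1 + d * ∑ i ∈ Finset.range k, (d - 2) ^ i ≤ n ∧
      (d : ℝ) < (n : ℝ) ^ (1 / (k : ℝ)) + 2 := by
  have hbound : 1 + d * ∑ i ∈ Finset.range k, (d - 2) ^ i ≤ n :=
    hn ▸ G.one_add_mul_geom_sum_le_card hcyc hreg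
  exact ⟨hbound, lt_rpow_inv_add_two_of_pow_sub_two_lt (by omega)
    ((pow_sub_two_lt_one_add_mul_geom_sum d (by omega)).trans_le hbound)⟩
end

section
/- Let G be a graph with no even cycle of length at most 2k, and suppose two distinct paths of length exactly k join vertices u and v. Then the distance between u and v in G is strictly less than k. -/
/-!
Two distinct paths with the same endpoints contain subwalks `p'`, `q'` from `u'` to `v'` such that
`p' ++ q'.reverse` is a cycle (`IsPath.exists_isCycle_of_ne`). If `dist u v = k`, both paths are
geodesics, hence so are all their subwalks: `p'` and `q'` both have length `dist u' v' ≤ k`, and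
the cycle has even length `2 * dist u' v' ≤ 2k`.
-/

namespace SimpleGraph.Walk

variable {V : Type*} {G : SimpleGraph V} {u v : V}

theorem exists_isCycle_even_length_le_two_mul_dist_of_ne {p q : G.Walk u v}
    (hp : p.length = G.dist u v) (hq : q.length = G.dist u v) (hpq : p ≠ q) :
    ∃ (x : V) (c : G.Walk x x), c.IsCycle ∧ Even c.length ∧ c.length ≤ 2 * G.dist u v := by
  obtain ⟨u', v', p', q', hp', hq', hcycle⟩ :=
    (p.isPath_of_length_eq_dist hp).exists_isCycle_of_ne (q.isPath_of_length_eq_dist hq) hpq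
  have hp'_dist : p'.length = G.dist u' v' := length_eq_dist_of_subwalk hp hp'
  have hq'_dist : q'.length = G.dist u' v' := length_eq_dist_of_subwalk hq hq'
  have hp'_le : p'.length ≤ G.dist u v := hp ▸ length_le_of_isSubwalk hp'
  refine ⟨u', _, hcycle, ⟨G.dist u' v', ?_⟩, ?_⟩ <;>
    simp only [length_append, length_reverse] <;> omega

end SimpleGraph.Walk

theorem dist_lt_of_two_k_paths_general {V : Type*} (G : SimpleGraph V) (k : ℕ)
    (hcyc : ∀ (x : V) (c : G.Walk x x), c.IsCycle → Even c.length → ¬ c.length ≤ 2 * k)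
    (u v : V) (P Q : G.Walk u v)
    (hPk : P.length = k) (hQk : Q.length = k) (hne : P ≠ Q) :
    G.dist u v < k := by
  by_contra! hk_le
  have hdist : G.dist u v = k := le_antisymm (hPk ▸ G.dist_le P) hk_le
  obtain ⟨x, c, hc, heven, hlen⟩ :=
    P.exists_isCycle_even_length_le_two_mul_dist_of_ne (hPk.trans hdist.symm)
      (hQk.trans hdist.symm) hne
  exact hcyc x c hc heven (hdist ▸ hlen)

/-- In a graph with no even cycle of length at most `2k`, if two distinct paths of length
exactly `k` join `u` and `v`, then the distance between `u` and `v` is less than `k`. -/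
theorem dist_lt_of_two_k_paths {V : Type*} (G : SimpleGraph V) (k : ℕ) (hk : 2 ≤ k)
    (hcyc : ∀ (x : V) (c : G.Walk x x), c.IsCycle → Even c.length → ¬ c.length ≤ 2 * k)
    (u v : V) (huv : u ≠ v) (P Q : G.Walk u v) (hP : P.IsPath) (hQ : Q.IsPath)
    (hPk : P.length = k) (hQk : Q.length = k) (hne : P ≠ Q) :
    G.dist u v < k :=
  dist_lt_of_two_k_paths_general G k hcyc u v P Q hPk hQk hne
end
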